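/- (Lemma: evaluation of the quantities A₁,…,A₄ for Haar kernels.) Let k ≤ k' be positive integers, f a bounded probability density on [0,1], X_1,…,X_n i.i.d. with density f, G(x,y) = K_{k'}(x,y) − K_k(x,y), and H its completely degenerate part H(x,y) = G(x,y) − ∫₀¹G(x,y')f(y')dy' − ∫₀¹G(x',y)f(x')dx' + ∫₀¹∫₀¹ G f f. With A₁² = n(n−1)·E_f[H(X₁,X₂)²], A₂ = sup{ |E_f[Σ_{i=1}^n Σ_{j=1}^{i−1} H(X₁,X₂)a_i(X₁)b_j(X₂)]| : E_f[Σ a_i(X₁)²] ≤ 1, E_f[Σ b_j(X₂)²] ≤ 1 }, A₃² = n·sup_x E_f[H(x,X₂)²], A₄ = sup_{x,y}|H(x,y)|, there exists a constant C depending only on sup_{[0,1]} f such that A₁² ≤ C·n(n−1)·(k' + k), A₂ ≤ C·n, A₃² ≤ C·n·(k' + k), and A₄ ≤ C·(k' + k). -/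

import Mathlib

open MeasureTheory Set Filter
open scoped Classical

noncomputable section

/-- Indicator of the interval ((j)/k, (j+1)/k] (0-indexed version of ((j-1)/k, j/k], j=1..k). -/
def haarInd (k j : ℕ) (x : ℝ) : ℝ :=
  if x ∈ Set.Ioc ((j : ℝ) / k) (((j : ℝ) + 1) / k) then 1 else 0

/-- Haar function ψ_{k,j} (0-indexed). -/
def haarFun (k j : ℕ) (x : ℝ) : ℝ := Real.sqrt k * haarInd k j x

/-- Haar projection kernel K_k(x,y) = k·Σ_j 1{x ∈ I_j}1{y ∈ I_j}. -/
def haarKernel (k : ℕ) (x y : ℝ) : ℝ :=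
  (k : ℝ) * ∑ j ∈ Finset.range k, haarInd k j x * haarInd k j y

/-- Haar projection f_k(x) = ∫₀¹ K_k(x,y) f(y) dy. -/
def haarProj (k : ℕ) (f : ℝ → ℝ) (x : ℝ) : ℝ :=
  ∫ y in Set.Icc (0:ℝ) 1, haarKernel k x y * f y

/-- f is a probability density on [0,1]. -/
def IsDensity (f : ℝ → ℝ) : Prop :=
  Measurable f ∧ (∀ x ∈ Set.Icc (0:ℝ) 1, 0 ≤ f x) ∧ (∫ x in Set.Icc (0:ℝ) 1, f x) = 1

/-- Law of an i.i.d. n-sample X_1,…,X_n from density f on [0,1]. -/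
def sampleMeasure (f : ℝ → ℝ) (n : ℕ) : Measure (Fin n → ℝ) :=
  (Measure.pi fun _ : Fin n => volume.restrict (Set.Icc (0:ℝ) 1)).withDensity
    (fun X => ∏ i, ENNReal.ofReal (f (X i)))

/-- Hölder ball H(β,L) of functions on [0,1]. -/
def holderBall (β L : ℝ) : Set (ℝ → ℝ) :=
  {h | (∀ x ∈ Set.Icc (0:ℝ) 1, |h x| ≤ L) ∧
    ∀ x ∈ Set.Icc (0:ℝ) 1, ∀ y ∈ Set.Icc (0:ℝ) 1, |h x - h y| ≤ L * |x - y| ^ β}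

/-- Second-order Haar U-statistic U_n^{(k)}. -/
def Ustat (k n : ℕ) (X : Fin n → ℝ) : ℝ :=
  (1 / ((n : ℝ) * ((n : ℝ) - 1))) *
    ∑ i : Fin n, ∑ j : Fin n, if i ≠ j then haarKernel k (X i) (X j) else 0

/-- Third-order V-statistic over distinct triples. -/
def V3 (n : ℕ) (h : ℝ → ℝ → ℝ → ℝ) (X : Fin n → ℝ) : ℝ :=
  (1 / ((n : ℝ) * ((n : ℝ) - 1) * ((n : ℝ) - 2))) *
    ∑ i1 : Fin n, ∑ i2 : Fin n, ∑ i3 : Fin n,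
      if i1 ≠ i2 ∧ i1 ≠ i3 ∧ i2 ≠ i3 then h (X i1) (X i2) (X i3) else 0

/-- Third-order U-statistic estimator of ∫ f³ built from Haar projection kernels. -/
def phiHat (k1 k2 k3 n : ℕ) (X : Fin n → ℝ) : ℝ :=
  V3 n (fun x1 x2 x3 => ∫ x in Set.Icc (0:ℝ) 1,
      haarKernel k1 x x1 * haarKernel k1 x x2 * haarKernel k1 x x3) X
  + 3 * V3 n (fun x1 x2 x3 => ∫ x in Set.Icc (0:ℝ) 1,
      haarKernel k1 x x1 * (haarKernel k3 x x2 - haarKernel k1 x x2) * haarKernel k1 x x3) X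
  + 3 * V3 n (fun x1 x2 x3 => ∫ x in Set.Icc (0:ℝ) 1,
      haarKernel k1 x x1 * (haarKernel k3 x x2 - haarKernel k1 x x2) *
        (haarKernel k3 x x3 - haarKernel k1 x x3)) X
  + 3 * V3 n (fun x1 x2 x3 => ∫ x in Set.Icc (0:ℝ) 1,
      (haarKernel k2 x x1 - haarKernel k1 x x1) * (haarKernel k2 x x2 - haarKernel k1 x x2) *
        (haarKernel k3 x x3 - haarKernel k2 x x3)) X
  + V3 n (fun x1 x2 x3 => ∫ x in Set.Icc (0:ℝ) 1,
      (haarKernel k2 x x1 - haarKernel k1 x x1) * (haarKernel k2 x x2 - haarKernel k1 x x2) *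
        (haarKernel k2 x x3 - haarKernel k1 x x3)) X

/-- N = largest integer with d^{N-1} ≤ n^{1-2/log log n}. -/
def gridN (d : ℝ) (n : ℕ) : ℕ :=
  Nat.findGreatest (fun N => d ^ (N - 1) ≤ (n : ℝ) ^ (1 - 2 / Real.log (Real.log n))) n

/-- β_j solving d^j·n = n^{2/(1+4β_j)}. -/
def gridBeta (d : ℝ) (n j : ℕ) : ℝ :=
  (2 * Real.log n / Real.log (d ^ j * (n : ℝ)) - 1) / 4

/-- k_j* = (n²/log n)^{1/(1+4β_j)}. -/
def gridKstar (d : ℝ) (n : ℕ) (j : ℕ) : ℝ :=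
  ((n : ℝ) ^ 2 / Real.log n) ^ (1 / (1 + 4 * gridBeta d n j))

/-- s* = smallest j with k_j* ≥ n. -/
def gridS (d : ℝ) (n : ℕ) : ℕ := sInf {j : ℕ | (n : ℝ) ≤ gridKstar d n j}

/-- The Lepski selector ĵ based on the Haar quadratic U-statistics. -/
def lepskiJ (d Copt : ℝ) (n : ℕ) (X : Fin n → ℝ) : ℕ :=
  sInf {j : ℕ | gridS d n ≤ j ∧ j ≤ gridN d n - 1 ∧
    ∀ l : ℕ, j ≤ l → l ≤ gridN d n - 1 →
      (Ustat (⌈gridKstar d n l⌉₊) n X - Ustat (⌈gridKstar d n j⌉₊) n X) ^ 2 ≤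
        Copt ^ 2 * Real.log n * (gridKstar d n l / (n : ℝ) ^ 2)}

/-- Completely degenerate part H of G = K_{k'} − K_k under density f. -/
def degKernel (k k' : ℕ) (f : ℝ → ℝ) (x y : ℝ) : ℝ :=
  (haarKernel k' x y - haarKernel k x y)
  - (∫ y' in Set.Icc (0:ℝ) 1, (haarKernel k' x y' - haarKernel k x y') * f y')
  - (∫ x' in Set.Icc (0:ℝ) 1, (haarKernel k' x' y - haarKernel k x' y) * f x')
  + ∫ x' in Set.Icc (0:ℝ) 1, ∫ y' in Set.Icc (0:ℝ) 1,
      (haarKernel k' x' y' - haarKernel k x' y') * f x' * f y'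


/-- A₁ with A₁² = n(n−1)·E_f[H(X₁,X₂)²]. -/
def quadA1 (k k' n : ℕ) (f : ℝ → ℝ) : ℝ :=
  Real.sqrt ((n : ℝ) * ((n : ℝ) - 1) *
    ∫ x in Set.Icc (0:ℝ) 1, ∫ y in Set.Icc (0:ℝ) 1, degKernel k k' f x y ^ 2 * f x * f y)

/-- A₂ : the supremum of bilinear-form expectations over L²-normalized families. -/
def quadA2 (k k' n : ℕ) (f : ℝ → ℝ) : ℝ :=
  sSup {r : ℝ | ∃ a b : ℕ → ℝ → ℝ,
    (∀ i, Measurable (a i)) ∧ (∀ j, Measurable (b j)) ∧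
    (∫ x in Set.Icc (0:ℝ) 1, (∑ i ∈ Finset.range n, a i x ^ 2) * f x) ≤ 1 ∧
    (∫ y in Set.Icc (0:ℝ) 1, (∑ j ∈ Finset.range n, b j y ^ 2) * f y) ≤ 1 ∧
    r = |∫ x in Set.Icc (0:ℝ) 1, ∫ y in Set.Icc (0:ℝ) 1,
          degKernel k k' f x y *
            (∑ i ∈ Finset.range n, ∑ j ∈ Finset.range i, a i x * b j y) * f x * f y|}

/-- A₃ with A₃² = n·sup_x E_f[H(x,X₂)²]. -/
def quadA3 (k k' n : ℕ) (f : ℝ → ℝ) : ℝ :=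
  Real.sqrt ((n : ℝ) *
    ⨆ x : ℝ, ∫ y in Set.Icc (0:ℝ) 1, degKernel k k' f x y ^ 2 * f y)

/-- A₄ = sup_{x,y} |H(x,y)|. -/
def quadA4 (k k' : ℕ) (f : ℝ → ℝ) : ℝ :=
  ⨆ x : ℝ, ⨆ y : ℝ, |degKernel k k' f x y|


/-!
Let `ν` be the law with density `f`: a probability measure with `ν ≤ F • volume`, so each Haar
cell of length `1/k` has mass at most `F/k` and `∫ K_k(x, y) dν(y) ≤ F`. For `G = K_{k'} - K_k`
this gives `|G| ≤ k' + k` and `∫ |G(x, y)| dν(y) ≤ 2F`. The degenerate part `H` subtracts three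
averages of the symmetric kernel `G`, each bounded by `2F`, so `|H| ≤ k' + k + 6F` and
`∫ |H(x, y)| dν(y) ≤ 8F`; this is `A₄`, and `∫ H(x, y)² dν(y) ≤ sup |H| · ∫ |H(x, y)| dν(y)`
gives `A₁` and `A₃`. For `A₂`, `|∑_{j < i < n} a_i(x) b_j(y)| ≤ n/2 (∑ a_i(x)² + ∑ b_j(y)²)`, and
a Schur test against `|H|`, whose row and column integrals are at most `8F`, bounds the bilinear
form by `8F n`.
-/

open Finset Function

theorem Real.sSup_le_of_forall_le_or_mul_mem {S : Set ℝ} {c : ℝ} (hc : 0 ≤ c)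
    (h : ∀ r ∈ S, r ≤ c ∨ ∀ t > 0, t * r ∈ S) : sSup S ≤ c := by
  by_cases hS : BddAbove S
  · obtain ⟨M, hM⟩ := hS
    refine Real.sSup_le (fun r hr => (h r hr).elim id fun hray => ?_) hc
    by_contra! hrc
    have hr : 0 < r := hc.trans_lt hrc
    have hmem := hM (hray ((|M| + 1) / r) (by positivity))
    rw [div_mul_cancel₀ _ hr.ne'] at hmem
    linarith [le_abs_self M]
  · rw [Real.sSup_of_not_bddAbove hS]
    exact hc

theorem abs_sum_range_sum_range_mul_le (n : ℕ) (a b : ℕ → ℝ) :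
    |∑ i ∈ range n, ∑ j ∈ range i, a i * b j|
      ≤ n / 2 * (∑ i ∈ range n, a i ^ 2 + ∑ j ∈ range n, b j ^ 2) :=
  calc |∑ i ∈ range n, ∑ j ∈ range i, a i * b j|
      ≤ ∑ i ∈ range n, ∑ j ∈ range i, |a i * b j| :=
        (abs_sum_le_sum_abs _ _).trans (sum_le_sum fun i _ => abs_sum_le_sum_abs _ _)
    _ ≤ ∑ i ∈ range n, ∑ j ∈ range n, (a i ^ 2 + b j ^ 2) / 2 := by
        refine sum_le_sum fun i hi => ?_
        refine (sum_le_sum_of_subset_of_nonneg (range_subset_range.2 (mem_range.1 hi).le)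
          fun _ _ _ => abs_nonneg _).trans (sum_le_sum fun j _ => ?_)
        rw [abs_mul]
        nlinarith [sq_nonneg (|a i| - |b j|), sq_abs (a i), sq_abs (b j)]
    _ = n / 2 * (∑ i ∈ range n, a i ^ 2 + ∑ j ∈ range n, b j ^ 2) := by
        simp only [← sum_div, sum_add_distrib, sum_const, card_range, nsmul_eq_mul, ← mul_sum]
        ring

theorem natCast_mul_natCast_sub_one_nonneg (n : ℕ) : 0 ≤ (n : ℝ) * (n - 1) := by
  rcases n.eq_zero_or_pos with rfl | hn
  · simp
  · exact mul_nonneg n.cast_nonneg (sub_nonneg.mpr (by exact_mod_cast hn))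

section FiniteMeasure

variable {α : Type*} [MeasurableSpace α] {ν : Measure α} [IsFiniteMeasure ν]

theorem integral_sq_le_mul_integral_abs {u : α → ℝ} {B : ℝ} (hu : AEStronglyMeasurable u ν)
    (hB : ∀ x, |u x| ≤ B) : ∫ x, u x ^ 2 ∂ν ≤ B * ∫ x, |u x| ∂ν := by
  rw [← integral_const_mul]
  refine integral_mono_of_nonneg (ae_of_all _ fun x => sq_nonneg _)
    ((Integrable.of_bound hu.norm B (ae_of_all _ fun x => by simpa using hB x)).const_mul B)
    (ae_of_all _ fun x => ?_)
  dsimp only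
  rw [← sq_abs, sq]
  exact mul_le_mul_of_nonneg_right (hB x) (abs_nonneg _)

theorem abs_integral_integral_mul_le {H Φ : α → α → ℝ} {U V : α → ℝ} {B A : ℝ}
    (hHm : Measurable (uncurry H)) (hHB : ∀ x y, |H x y| ≤ B)
    (hrow : ∀ x, ∫ y, |H x y| ∂ν ≤ A) (hcol : ∀ y, ∫ x, |H x y| ∂ν ≤ A)
    (hΦm : Measurable (uncurry Φ)) (hU : Integrable U ν) (hV : Integrable V ν)
    (hU0 : 0 ≤ U) (hV0 : 0 ≤ V) (hΦ : ∀ x y, |Φ x y| ≤ U x + V y) :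
    |∫ x, ∫ y, H x y * Φ x y ∂ν ∂ν| ≤ A * (∫ x, U x ∂ν + ∫ y, V y ∂ν) := by
  have hHbdd : ∀ p : α × α, ‖|H p.1 p.2|‖ ≤ B := fun p => by simpa using hHB p.1 p.2
  have hHU : Integrable (fun p : α × α => |H p.1 p.2| * U p.1) (ν.prod ν) :=
    (hU.comp_fst ν).bdd_mul hHm.abs.aestronglyMeasurable (ae_of_all _ hHbdd)
  have hHV : Integrable (fun p : α × α => |H p.1 p.2| * V p.2) (ν.prod ν) :=
    (hV.comp_snd ν).bdd_mul hHm.abs.aestronglyMeasurable (ae_of_all _ hHbdd)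
  have hpt : ∀ p : α × α,
      |H p.1 p.2 * Φ p.1 p.2| ≤ |H p.1 p.2| * U p.1 + |H p.1 p.2| * V p.2 := fun p => by
    rw [abs_mul, ← mul_add]
    exact mul_le_mul_of_nonneg_left (hΦ p.1 p.2) (abs_nonneg _)
  have hHΦ : Integrable (fun p : α × α => H p.1 p.2 * Φ p.1 p.2) (ν.prod ν) :=
    (hHU.add hHV).mono' (hHm.mul hΦm).aestronglyMeasurable (ae_of_all _ hpt)
  have hUpart : ∫ p, |H p.1 p.2| * U p.1 ∂ν.prod ν ≤ A * ∫ x, U x ∂ν := by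
    rw [integral_prod _ hHU, ← integral_const_mul]
    refine integral_mono_of_nonneg (ae_of_all _ fun x => ?_) (hU.const_mul A)
      (ae_of_all _ fun x => ?_)
    · exact integral_nonneg fun y => mul_nonneg (abs_nonneg _) (hU0 x)
    · simp only [integral_mul_const]
      exact mul_le_mul_of_nonneg_right (hrow x) (hU0 x)
  have hVpart : ∫ p, |H p.1 p.2| * V p.2 ∂ν.prod ν ≤ A * ∫ y, V y ∂ν := by
    rw [integral_prod_symm _ hHV, ← integral_const_mul]
    refine integral_mono_of_nonneg (ae_of_all _ fun y => ?_) (hV.const_mul A)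
      (ae_of_all _ fun y => ?_)
    · exact integral_nonneg fun x => mul_nonneg (abs_nonneg _) (hV0 y)
    · simp only [integral_mul_const]
      exact mul_le_mul_of_nonneg_right (hcol y) (hV0 y)
  calc |∫ x, ∫ y, H x y * Φ x y ∂ν ∂ν|
      = |∫ p, H p.1 p.2 * Φ p.1 p.2 ∂ν.prod ν| := by rw [integral_prod _ hHΦ]
    _ ≤ ∫ p, |H p.1 p.2| * U p.1 + |H p.1 p.2| * V p.2 ∂ν.prod ν :=
        abs_integral_le_integral_abs.trans
          (integral_mono_of_nonneg (ae_of_all _ fun p => abs_nonneg _) (hHU.add hHV)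
            (ae_of_all _ hpt))
    _ ≤ A * (∫ x, U x ∂ν + ∫ y, V y ∂ν) := by
        rw [integral_add hHU hHV, mul_add]
        exact add_le_add hUpart hVpart

end FiniteMeasure

def degeneratePart {α : Type*} [MeasurableSpace α] (ν : Measure α) (G : α → α → ℝ)
    (x y : α) : ℝ :=
  G x y - ∫ y', G x y' ∂ν - ∫ x', G x' y ∂ν + ∫ x', ∫ y', G x' y' ∂ν ∂ν

section DegeneratePart

variable {α : Type*} [MeasurableSpace α] {ν : Measure α} {G : α → α → ℝ} {M A : ℝ}

theorem degeneratePart_comm (hGs : ∀ x y, G x y = G y x) (x y : α) :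
    degeneratePart ν G x y = degeneratePart ν G y x := by
  have hcol : ∀ y, (fun x' => G x' y) = G y := fun y => funext fun x' => hGs x' y
  simp only [degeneratePart, hcol, hGs x y]
  ring

theorem measurable_degeneratePart [SFinite ν] (hGm : Measurable (uncurry G)) :
    Measurable (uncurry (degeneratePart ν G)) := by
  have hrow : Measurable fun x => ∫ y, G x y ∂ν :=
    hGm.stronglyMeasurable.integral_prod_right.measurable
  have hcol : Measurable fun y => ∫ x, G x y ∂ν :=
    hGm.stronglyMeasurable.integral_prod_left.measurable
  exact ((hGm.sub (hrow.comp measurable_fst)).sub (hcol.comp measurable_snd)).add_const _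

variable [IsProbabilityMeasure ν]

theorem abs_degeneratePart_le (hGs : ∀ x y, G x y = G y x)
    (hGA : ∀ x, ∫ y, |G x y| ∂ν ≤ A) (x y : α) :
    |degeneratePart ν G x y| ≤ |G x y| + 3 * A := by
  have hrow : ∀ x, |∫ y, G x y ∂ν| ≤ A := fun x => abs_integral_le_integral_abs.trans (hGA x)
  have hcol : |∫ x', G x' y ∂ν| ≤ A := by
    simpa only [hGs _ y] using hrow y
  have hdouble : |∫ x', ∫ y', G x' y' ∂ν ∂ν| ≤ A := by
    simpa using norm_integral_le_of_norm_le_const (μ := ν)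
      (ae_of_all _ fun x' => (Real.norm_eq_abs _).trans_le (hrow x'))
  obtain ⟨h₁, h₁'⟩ := abs_le.mp (hrow x)
  obtain ⟨h₂, h₂'⟩ := abs_le.mp hcol
  obtain ⟨h₃, h₃'⟩ := abs_le.mp hdouble
  unfold degeneratePart
  exact abs_le.mpr ⟨by linarith [neg_abs_le (G x y)], by linarith [le_abs_self (G x y)]⟩

theorem integral_abs_degeneratePart_le (hGm : Measurable (uncurry G))
    (hGs : ∀ x y, G x y = G y x) (hGM : ∀ x y, |G x y| ≤ M)
    (hGA : ∀ x, ∫ y, |G x y| ∂ν ≤ A) (x : α) :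
    ∫ y, |degeneratePart ν G x y| ∂ν ≤ 4 * A := by
  have hGx : Integrable (G x) ν :=
    .of_bound (hGm.comp measurable_prodMk_left).aestronglyMeasurable M (ae_of_all _ (hGM x))
  have hint : Integrable (fun y => |G x y| + 3 * A) ν := hGx.abs.add (integrable_const _)
  calc ∫ y, |degeneratePart ν G x y| ∂ν ≤ ∫ y, |G x y| + 3 * A ∂ν :=
        integral_mono_of_nonneg (ae_of_all _ fun y => abs_nonneg _) hint
          (ae_of_all _ (abs_degeneratePart_le hGs hGA x))
    _ ≤ 4 * A := by
        rw [integral_add hGx.abs (integrable_const _)]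
        simp only [integral_const, probReal_univ, one_smul]
        linarith [hGA x]

end DegeneratePart

def haarCell (k j : ℕ) : Set ℝ := Set.Ioc ((j : ℝ) / k) (((j : ℝ) + 1) / k)

section Haar

variable {ν : Measure ℝ} {F : ℝ}

theorem haarInd_eq_indicator (k j : ℕ) : haarInd k j = (haarCell k j).indicator 1 := by
  ext x
  simp [haarInd, haarCell, Set.indicator]

theorem haarInd_nonneg (k j : ℕ) (x : ℝ) : 0 ≤ haarInd k j x := by
  unfold haarInd; split <;> norm_num

theorem haarInd_le_one (k j : ℕ) (x : ℝ) : haarInd k j x ≤ 1 := by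
  unfold haarInd; split <;> norm_num

theorem measurableSet_haarCell (k j : ℕ) : MeasurableSet (haarCell k j) := measurableSet_Ioc

theorem pairwiseDisjoint_haarCell (k : ℕ) (s : Finset ℕ) :
    (s : Set ℕ).PairwiseDisjoint (haarCell k) := by
  have hmono : Monotone fun j : ℕ => (j : ℝ) / k := fun i j hij =>
    div_le_div_of_nonneg_right (by exact_mod_cast hij) (Nat.cast_nonneg k)
  refine fun i _ j _ hij => ?_
  simpa [haarCell, Function.onFun] using hmono.pairwise_disjoint_on_Ioc_succ hij

theorem sum_haarInd_le_one (k : ℕ) (x : ℝ) : ∑ j ∈ range k, haarInd k j x ≤ 1 := by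
  simp only [haarInd_eq_indicator]
  rw [← Finset.indicator_biUnion_apply _ _ (pairwiseDisjoint_haarCell k _)]
  exact Set.indicator_apply_le' (fun _ => le_rfl) fun _ => zero_le_one

theorem haarKernel_comm (k : ℕ) (x y : ℝ) : haarKernel k x y = haarKernel k y x := by
  simp only [haarKernel, mul_comm (haarInd k _ x)]

theorem haarKernel_sub_comm (k k' : ℕ) (x y : ℝ) :
    haarKernel k' x y - haarKernel k x y = haarKernel k' y x - haarKernel k y x := by
  rw [haarKernel_comm k', haarKernel_comm k]

theorem measurable_haarKernel (k : ℕ) : Measurable (uncurry (haarKernel k)) := by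
  have hind : ∀ j, Measurable (haarInd k j) := fun j => by
    rw [haarInd_eq_indicator]
    exact measurable_const.indicator (measurableSet_haarCell k j)
  exact (Finset.measurable_sum _ fun j _ =>
    ((hind j).comp measurable_fst).mul ((hind j).comp measurable_snd)).const_mul _

theorem haarKernel_nonneg (k : ℕ) (x y : ℝ) : 0 ≤ haarKernel k x y :=
  mul_nonneg k.cast_nonneg
    (sum_nonneg fun j _ => mul_nonneg (haarInd_nonneg k j x) (haarInd_nonneg k j y))

theorem haarKernel_le (k : ℕ) (x y : ℝ) : haarKernel k x y ≤ k := by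
  refine mul_le_of_le_one_right k.cast_nonneg
    ((sum_le_sum fun j _ => ?_).trans (sum_haarInd_le_one k x))
  exact mul_le_of_le_one_right (haarInd_nonneg k j x) (haarInd_le_one k j y)

theorem abs_haarKernel_sub_le (k k' : ℕ) (x y : ℝ) :
    |haarKernel k' x y - haarKernel k x y| ≤ k' + k := by
  have := haarKernel_nonneg k x y
  have := haarKernel_nonneg k' x y
  have := haarKernel_le k x y
  have := haarKernel_le k' x y
  exact abs_le.mpr ⟨by linarith, by linarith⟩

theorem natCast_mul_measureReal_haarCell_le (hν : ν ≤ ENNReal.ofReal F • volume) (hF : 0 ≤ F)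
    (k j : ℕ) : (k : ℝ) * ν.real (haarCell k j) ≤ F := by
  rcases k.eq_zero_or_pos with rfl | hk
  · simpa using hF
  have hvol : volume (haarCell k j) = ENNReal.ofReal (1 / k) := by
    rw [haarCell, Real.volume_Ioc]
    ring_nf
  have hcell : ν.real (haarCell k j) ≤ F * (1 / k) := by
    have h := Measure.le_iff'.mp hν (haarCell k j)
    rw [Measure.smul_apply, hvol, smul_eq_mul, ← ENNReal.ofReal_mul hF] at h
    exact ENNReal.toReal_le_of_le_ofReal (by positivity) h
  calc (k : ℝ) * ν.real (haarCell k j) ≤ k * (F * (1 / k)) := by gcongr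
    _ = F := by field_simp

theorem integral_haarKernel_le [IsFiniteMeasure ν] (hν : ν ≤ ENNReal.ofReal F • volume)
    (hF : 0 ≤ F) (k : ℕ) (x : ℝ) : ∫ y, haarKernel k x y ∂ν ≤ F := by
  have hcell : ∀ j, ∫ y, haarInd k j y ∂ν = ν.real (haarCell k j) := fun j => by
    rw [haarInd_eq_indicator]
    exact integral_indicator_one (measurableSet_haarCell k j)
  have hint : ∀ j, Integrable (haarInd k j) ν := fun j => by
    rw [haarInd_eq_indicator]
    exact (integrable_const 1).indicator (measurableSet_haarCell k j)
  calc ∫ y, haarKernel k x y ∂ν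
      = ∑ j ∈ range k, haarInd k j x * (k * ν.real (haarCell k j)) := by
        simp only [haarKernel]
        rw [integral_const_mul,
          integral_finsetSum _ fun j _ => (hint j).const_mul _, mul_sum]
        refine sum_congr rfl fun j _ => ?_
        rw [integral_const_mul, hcell]
        ring
    _ ≤ ∑ j ∈ range k, haarInd k j x * F :=
        sum_le_sum fun j _ => mul_le_mul_of_nonneg_left
          (natCast_mul_measureReal_haarCell_le hν hF k j) (haarInd_nonneg k j x)
    _ ≤ F := by
        rw [← sum_mul]
        exact mul_le_of_le_one_left hF (sum_haarInd_le_one k x)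

theorem integral_abs_haarKernel_sub_le [IsFiniteMeasure ν] (hν : ν ≤ ENNReal.ofReal F • volume)
    (hF : 0 ≤ F) (k k' : ℕ) (x : ℝ) :
    ∫ y, |haarKernel k' x y - haarKernel k x y| ∂ν ≤ 2 * F := by
  have hint : ∀ k, Integrable (haarKernel k x) ν := fun k =>
    .of_bound ((measurable_haarKernel k).comp measurable_prodMk_left).aestronglyMeasurable k
      (ae_of_all _ fun y => by
        simpa [abs_of_nonneg (haarKernel_nonneg k x y)] using haarKernel_le k x y)
  calc ∫ y, |haarKernel k' x y - haarKernel k x y| ∂ν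
      ≤ ∫ y, haarKernel k' x y + haarKernel k x y ∂ν := by
        refine integral_mono_of_nonneg (ae_of_all _ fun y => abs_nonneg _)
          ((hint k').add (hint k)) (ae_of_all _ fun y => ?_)
        have := haarKernel_nonneg k x y
        have := haarKernel_nonneg k' x y
        exact abs_le.mpr ⟨by linarith, by linarith⟩
    _ ≤ 2 * F := by
        rw [integral_add (hint k') (hint k)]
        linarith [integral_haarKernel_le hν hF k x, integral_haarKernel_le hν hF k' x]

end Haar

def densityMeasure (f : ℝ → ℝ) : Measure ℝ :=
  (volume.restrict (Icc 0 1)).withDensity fun x => ENNReal.ofReal (f x)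

section Density

variable {f : ℝ → ℝ} {F : ℝ}

theorem IsDensity.integrableOn (hf : IsDensity f) : IntegrableOn f (Icc 0 1) := by
  by_contra h
  simpa [integral_undef h] using hf.2.2

theorem isProbabilityMeasure_densityMeasure (hf : IsDensity f) :
    IsProbabilityMeasure (densityMeasure f) := by
  constructor
  rw [densityMeasure, withDensity_apply _ MeasurableSet.univ, Measure.restrict_univ,
    ← ofReal_integral_eq_lintegral_ofReal hf.integrableOn
      ((ae_restrict_iff' measurableSet_Icc).mpr (ae_of_all _ hf.2.1)), hf.2.2, ENNReal.ofReal_one]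

theorem densityMeasure_le (hfF : ∀ x ∈ Icc (0 : ℝ) 1, f x ≤ F) :
    densityMeasure f ≤ ENNReal.ofReal F • volume := by
  refine Measure.le_iff.mpr fun s hs => ?_
  rw [densityMeasure, withDensity_apply _ hs, Measure.restrict_restrict hs, Measure.smul_apply,
    smul_eq_mul]
  calc ∫⁻ x in s ∩ Icc 0 1, ENNReal.ofReal (f x) ≤ ∫⁻ _ in s ∩ Icc 0 1, ENNReal.ofReal F :=
        setLIntegral_mono measurable_const fun x hx => ENNReal.ofReal_le_ofReal (hfF x hx.2)
    _ ≤ ENNReal.ofReal F * volume s := by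
        rw [setLIntegral_const]
        gcongr
        exact Set.inter_subset_left

theorem integral_densityMeasure (hf : IsDensity f) (g : ℝ → ℝ) :
    ∫ x, g x ∂densityMeasure f = ∫ x in Icc 0 1, g x * f x := by
  rw [densityMeasure, integral_withDensity_eq_integral_toReal_smul hf.1.ennreal_ofReal
    (ae_of_all _ fun _ => ENNReal.ofReal_lt_top)]
  refine setIntegral_congr_fun measurableSet_Icc fun x hx => ?_
  simp [ENNReal.toReal_ofReal (hf.2.1 x hx), mul_comm]

theorem integral_integral_densityMeasure (hf : IsDensity f) (φ : ℝ → ℝ → ℝ) :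
    ∫ x, ∫ y, φ x y ∂densityMeasure f ∂densityMeasure f
      = ∫ x in Icc 0 1, ∫ y in Icc 0 1, φ x y * f x * f y := by
  rw [integral_densityMeasure hf]
  congr 1 with x
  rw [integral_densityMeasure hf, ← integral_mul_const]
  congr 1 with y
  ring

theorem integrable_densityMeasure_iff (hf : IsDensity f) {g : ℝ → ℝ} :
    Integrable g (densityMeasure f) ↔ IntegrableOn (fun x => g x * f x) (Icc 0 1) := by
  rw [densityMeasure, integrable_withDensity_iff_integrable_smul' hf.1.ennreal_ofReal
    (ae_of_all _ fun _ => ENNReal.ofReal_lt_top)]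
  refine integrable_congr ((ae_restrict_iff' measurableSet_Icc).mpr (ae_of_all _ fun x hx => ?_))
  simp [ENNReal.toReal_ofReal (hf.2.1 x hx), mul_comm]

theorem degKernel_eq_degeneratePart (hf : IsDensity f) (k k' : ℕ) :
    degKernel k k' f
      = degeneratePart (densityMeasure f) fun x y => haarKernel k' x y - haarKernel k x y := by
  ext x y
  rw [degKernel, degeneratePart, integral_integral_densityMeasure hf]
  simp only [integral_densityMeasure hf]

end Density

section DegKernel

variable {f : ℝ → ℝ} {F : ℝ} {k k' n : ℕ}

theorem degKernel_comm (hf : IsDensity f) (x y : ℝ) :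
    degKernel k k' f x y = degKernel k k' f y x := by
  rw [degKernel_eq_degeneratePart hf]
  exact degeneratePart_comm (haarKernel_sub_comm k k') x y

theorem measurable_degKernel (hf : IsDensity f) : Measurable (uncurry (degKernel k k' f)) := by
  have := isProbabilityMeasure_densityMeasure hf
  rw [degKernel_eq_degeneratePart hf]
  exact measurable_degeneratePart ((measurable_haarKernel k').sub (measurable_haarKernel k))

theorem abs_degKernel_le (hf : IsDensity f) (hfF : ∀ x ∈ Icc (0 : ℝ) 1, f x ≤ F) (hF : 0 ≤ F)
    (x y : ℝ) : |degKernel k k' f x y| ≤ k' + k + 6 * F := by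
  have := isProbabilityMeasure_densityMeasure hf
  rw [degKernel_eq_degeneratePart hf]
  have := abs_degeneratePart_le (haarKernel_sub_comm k k')
    (integral_abs_haarKernel_sub_le (densityMeasure_le hfF) hF k k') x y
  linarith [abs_haarKernel_sub_le k k' x y]

theorem integral_abs_degKernel_le (hf : IsDensity f) (hfF : ∀ x ∈ Icc (0 : ℝ) 1, f x ≤ F)
    (hF : 0 ≤ F) (x : ℝ) : ∫ y, |degKernel k k' f x y| ∂densityMeasure f ≤ 8 * F := by
  have := isProbabilityMeasure_densityMeasure hf
  rw [degKernel_eq_degeneratePart hf]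
  have := integral_abs_degeneratePart_le
    ((measurable_haarKernel k').sub (measurable_haarKernel k)) (haarKernel_sub_comm k k')
    (abs_haarKernel_sub_le k k') (integral_abs_haarKernel_sub_le (densityMeasure_le hfF) hF k k') x
  linarith

theorem integral_sq_degKernel_le (hf : IsDensity f) (hfF : ∀ x ∈ Icc (0 : ℝ) 1, f x ≤ F)
    (hF : 0 ≤ F) (x : ℝ) :
    ∫ y, degKernel k k' f x y ^ 2 ∂densityMeasure f ≤ (k' + k + 6 * F) * (8 * F) := by
  have := isProbabilityMeasure_densityMeasure hf
  exact (integral_sq_le_mul_integral_abs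
    ((measurable_degKernel hf).comp measurable_prodMk_left).aestronglyMeasurable
    (abs_degKernel_le hf hfF hF x)).trans
    (mul_le_mul_of_nonneg_left (integral_abs_degKernel_le hf hfF hF x) (by positivity))

theorem quadA1_sq_le (hf : IsDensity f) (hfF : ∀ x ∈ Icc (0 : ℝ) 1, f x ≤ F) (hF : 0 ≤ F) :
    quadA1 k k' n f ^ 2 ≤ n * (n - 1) * ((k' + k + 6 * F) * (8 * F)) := by
  have := isProbabilityMeasure_densityMeasure hf
  have hnn := natCast_mul_natCast_sub_one_nonneg n
  refine Real.sq_sqrt'.trans_le (max_le (mul_le_mul_of_nonneg_left ?_ hnn) (by positivity))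
  rw [← integral_integral_densityMeasure hf fun x y => degKernel k k' f x y ^ 2]
  refine (le_abs_self _).trans ?_
  simpa using norm_integral_le_of_norm_le_const (μ := densityMeasure f)
    (ae_of_all _ fun x => (Real.norm_of_nonneg (integral_nonneg fun y => sq_nonneg _)).trans_le
      (integral_sq_degKernel_le (k := k) (k' := k') hf hfF hF x))

theorem quadA3_sq_le (hf : IsDensity f) (hfF : ∀ x ∈ Icc (0 : ℝ) 1, f x ≤ F) (hF : 0 ≤ F) :
    quadA3 k k' n f ^ 2 ≤ n * ((k' + k + 6 * F) * (8 * F)) := by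
  refine Real.sq_sqrt'.trans_le (max_le (mul_le_mul_of_nonneg_left ?_ n.cast_nonneg)
    (by positivity))
  exact ciSup_le fun x => integral_densityMeasure hf _ ▸ integral_sq_degKernel_le hf hfF hF x

theorem quadA4_le (hf : IsDensity f) (hfF : ∀ x ∈ Icc (0 : ℝ) 1, f x ≤ F) (hF : 0 ≤ F) :
    quadA4 k k' f ≤ k' + k + 6 * F :=
  ciSup_le fun x => ciSup_le fun y => abs_degKernel_le hf hfF hF x y

end DegKernel

section QuadA2

variable {f : ℝ → ℝ} {F : ℝ} {k k' n : ℕ}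

/-- A non-integrable family meets the constraint `∫ (∑ a i ^ 2) f ≤ 1` through the junk value `0`
of the integral, so it can be rescaled at will: either the set is unbounded and `sSup` is `0`, or
such a family has value `0`. -/
theorem quadA2_le_of_forall_le {c : ℝ} (hc : 0 ≤ c)
    (h : ∀ a b : ℕ → ℝ → ℝ, (∀ i, Measurable (a i)) → (∀ j, Measurable (b j)) →
      IntegrableOn (fun x => (∑ i ∈ range n, a i x ^ 2) * f x) (Icc 0 1) →
      IntegrableOn (fun y => (∑ j ∈ range n, b j y ^ 2) * f y) (Icc 0 1) →
      ∫ x in Icc (0 : ℝ) 1, (∑ i ∈ range n, a i x ^ 2) * f x ≤ 1 →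
      ∫ y in Icc (0 : ℝ) 1, (∑ j ∈ range n, b j y ^ 2) * f y ≤ 1 →
      |∫ x in Icc (0 : ℝ) 1, ∫ y in Icc (0 : ℝ) 1, degKernel k k' f x y *
        (∑ i ∈ range n, ∑ j ∈ range i, a i x * b j y) * f x * f y| ≤ c) :
    quadA2 k k' n f ≤ c := by
  have hsq : ∀ (a : ℕ → ℝ → ℝ) (t x : ℝ),
      ∑ i ∈ range n, (t * a i x) ^ 2 = t ^ 2 * ∑ i ∈ range n, a i x ^ 2 := fun a t x => by
    simp only [mul_pow, mul_sum]
  refine Real.sSup_le_of_forall_le_or_mul_mem hc ?_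
  rintro _ ⟨a, b, ha, hb, hA, hB, rfl⟩
  have hval : ∀ (u v : ℕ → ℝ → ℝ) (t : ℝ), 0 < t →
      (∀ i j x y, u i x * v j y = t * (a i x * b j y)) →
      t * |∫ x in Icc (0 : ℝ) 1, ∫ y in Icc (0 : ℝ) 1, degKernel k k' f x y *
          (∑ i ∈ range n, ∑ j ∈ range i, a i x * b j y) * f x * f y|
        = |∫ x in Icc (0 : ℝ) 1, ∫ y in Icc (0 : ℝ) 1, degKernel k k' f x y *
          (∑ i ∈ range n, ∑ j ∈ range i, u i x * v j y) * f x * f y| := by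
    intro u v t ht huv
    have hpt : ∀ x y, degKernel k k' f x y * (∑ i ∈ range n, ∑ j ∈ range i, u i x * v j y)
        * f x * f y = t * (degKernel k k' f x y
          * (∑ i ∈ range n, ∑ j ∈ range i, a i x * b j y) * f x * f y) := fun x y => by
      simp only [huv, ← mul_sum]
      ring
    simp only [hpt, integral_const_mul, abs_mul, abs_of_pos ht]
  by_cases hAi : IntegrableOn (fun x => (∑ i ∈ range n, a i x ^ 2) * f x) (Icc 0 1)
  · by_cases hBi : IntegrableOn (fun y => (∑ j ∈ range n, b j y ^ 2) * f y) (Icc 0 1)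
    · exact .inl (h a b ha hb hAi hBi hA hB)
    refine .inr fun t ht => ⟨a, fun j y => t * b j y, ha, fun j => (hb j).const_mul t, hA, ?_,
      hval _ _ t ht fun i j x y => by ring⟩
    simp [hsq, mul_assoc, integral_const_mul, integral_undef hBi]
  · refine .inr fun t ht => ⟨fun i x => t * a i x, b, fun i => (ha i).const_mul t, hb, ?_, hB,
      hval _ _ t ht fun i j x y => by ring⟩
    simp [hsq, mul_assoc, integral_const_mul, integral_undef hAi]

theorem quadA2_le (hf : IsDensity f) (hfF : ∀ x ∈ Icc (0 : ℝ) 1, f x ≤ F) (hF : 0 ≤ F) :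
    quadA2 k k' n f ≤ 8 * F * n := by
  have := isProbabilityMeasure_densityMeasure hf
  refine quadA2_le_of_forall_le (by positivity) fun a b ha hb hAi hBi hA hB => ?_
  rw [← integrable_densityMeasure_iff hf] at hAi hBi
  rw [← integral_densityMeasure hf] at hA hB
  rw [← integral_integral_densityMeasure hf fun x y =>
    degKernel k k' f x y * ∑ i ∈ range n, ∑ j ∈ range i, a i x * b j y]
  have hrow := integral_abs_degKernel_le (k := k) (k' := k') hf hfF hF
  have hΦm : Measurable (uncurry fun x y => ∑ i ∈ range n, ∑ j ∈ range i, a i x * b j y) :=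
    Finset.measurable_sum _ fun i _ => Finset.measurable_sum _ fun j _ =>
      ((ha i).comp measurable_fst).mul ((hb j).comp measurable_snd)
  calc _ ≤ 8 * F * (∫ x, n / 2 * ∑ i ∈ range n, a i x ^ 2 ∂densityMeasure f
        + ∫ y, n / 2 * ∑ j ∈ range n, b j y ^ 2 ∂densityMeasure f) :=
        abs_integral_integral_mul_le (measurable_degKernel hf) (abs_degKernel_le hf hfF hF) hrow
          (fun y => by simpa only [degKernel_comm hf _ y] using hrow y) hΦm
          (hAi.const_mul _) (hBi.const_mul _) (fun x => by positivity) (fun y => by positivity)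
          fun x y => (abs_sum_range_sum_range_mul_le n (a · x) (b · y)).trans_eq (mul_add _ _ _)
    _ ≤ 8 * F * (n / 2 * 1 + n / 2 * 1) := by
        rw [integral_const_mul, integral_const_mul]
        gcongr
    _ = 8 * F * n := by ring

end QuadA2

/-- Lemma: evaluation of the quantities A₁,…,A₄ for Haar kernels, with a constant
depending only on the sup-norm bound F of the density. -/
theorem evaluation_A1_to_A4 (F : ℝ) (hF : 0 < F) :
    ∃ C > 0, ∀ k k' n : ℕ, 0 < k → k ≤ k' →
      ∀ f : ℝ → ℝ, IsDensity f → (∀ x ∈ Set.Icc (0:ℝ) 1, f x ≤ F) →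
        quadA1 k k' n f ^ 2 ≤ C * ((n : ℝ) * ((n : ℝ) - 1)) * ((k' : ℝ) + k) ∧
        quadA2 k k' n f ≤ C * n ∧
        quadA3 k k' n f ^ 2 ≤ C * n * ((k' : ℝ) + k) ∧
        quadA4 k k' f ≤ C * ((k' : ℝ) + k) := by
  refine ⟨(1 + 8 * F) ^ 2, by positivity, fun k k' n hk _ f hf hfF => ?_⟩
  have hkk : (1 : ℝ) ≤ k' + k := by
    have : (1 : ℝ) ≤ k := by exact_mod_cast hk
    linarith [k'.cast_nonneg (α := ℝ)]
  have hF1 : 0 ≤ F * ((k' + k) - 1) := mul_nonneg hF.le (by linarith)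
  have hF2 : 0 ≤ F ^ 2 * ((k' + k) - 1) := mul_nonneg (sq_nonneg F) (by linarith)
  have hsq : ((k' : ℝ) + k + 6 * F) * (8 * F) ≤ (1 + 8 * F) ^ 2 * (k' + k) := by nlinarith
  have hsup : (k' : ℝ) + k + 6 * F ≤ (1 + 8 * F) ^ 2 * (k' + k) := by nlinarith
  have hn := natCast_mul_natCast_sub_one_nonneg n
  refine ⟨?_, ?_, ?_, ?_⟩
  · calc quadA1 k k' n f ^ 2 ≤ n * (n - 1) * ((k' + k + 6 * F) * (8 * F)) :=
          quadA1_sq_le hf hfF hF.le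
      _ ≤ (1 + 8 * F) ^ 2 * (n * (n - 1)) * (k' + k) :=
          (mul_le_mul_of_nonneg_left hsq hn).trans_eq (by ring)
  · exact (quadA2_le hf hfF hF.le).trans (by gcongr; nlinarith)
  · calc quadA3 k k' n f ^ 2 ≤ n * ((k' + k + 6 * F) * (8 * F)) := quadA3_sq_le hf hfF hF.le
      _ ≤ (1 + 8 * F) ^ 2 * n * (k' + k) :=
          (mul_le_mul_of_nonneg_left hsq n.cast_nonneg).trans_eq (by ring)
  · exact (quadA4_le hf hfF hF.le).trans hsup
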